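/- Let A, B ∈ ℝ^{n×n} and let D, E be diagonal matrices whose diagonal entries all belong to {-1, +1}. Then (A, B) is diagonally Riccati stable if and only if (DAD, DBE) is diagonally Riccati stable. -/

import Mathlib

open Matrix

/-- The pair `(A, B)` is diagonally Riccati stable. -/
def DiagRiccatiStable {m : ℕ} (A B : Matrix (Fin m) (Fin m) ℝ) : Prop :=
  ∃ P Q : Matrix (Fin m) (Fin m) ℝ, P.IsDiag ∧ Q.IsDiag ∧ P.PosDef ∧ Q.PosDef ∧
    (-(Aᵀ * P + P * A + Q + P * B * Q⁻¹ * Bᵀ * P)).PosDef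

/-!
The same `P, Q` witness both sides. Diagonal sign matrices are symmetric involutions commuting
with the diagonal `P, Q, Q⁻¹`, so the Riccati matrix of `(DAD, DBE)` at `(P, Q)` is `D R D`, where
`R` is that of `(A, B)`; congruence by the invertible `D` preserves positive definiteness.
-/

namespace Matrix

variable {ι R : Type*} [Fintype ι] [DecidableEq ι]

theorem IsDiag.commute [CommSemiring R] {A B : Matrix ι ι R} (hA : A.IsDiag) (hB : B.IsDiag) :
    Commute A B := by
  rw [← hA.diagonal_diag, ← hB.diagonal_diag]
  exact (Commute.all _ _).map (diagonalRingHom ι R)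

theorem IsDiag.inv [CommRing R] {A : Matrix ι ι R} (hA : A.IsDiag) : A⁻¹.IsDiag := by
  rw [← hA.diagonal_diag, inv_diagonal]
  exact isDiag_diagonal _

theorem IsDiag.mul_self_eq_one [Ring R] {A : Matrix ι ι R} (hA : A.IsDiag)
    (hsign : ∀ i, A i i = 1 ∨ A i i = -1) : A * A = 1 := by
  rw [← hA.diagonal_diag, diagonal_mul_diagonal, ← diagonal_one]
  congr 1
  ext i
  rcases hsign i with h | h <;> simp [h]

theorem posDef_conj_involution_iff [Ring R] [PartialOrder R] [StarRing R] {U x : Matrix ι ι R}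
    (hU : IsSelfAdjoint U) (hUU : U * U = 1) : (U * x * U).PosDef ↔ x.PosDef := by
  have hunit : IsUnit U := ⟨⟨U, U, hUU, hUU⟩, rfl⟩
  simpa only [hU.star_eq] using hunit.posDef_star_left_conjugate_iff

noncomputable def riccati [CommRing R] (A B P Q : Matrix ι ι R) : Matrix ι ι R :=
  Aᵀ * P + P * A + Q + P * B * Q⁻¹ * Bᵀ * P

theorem riccati_conj [CommRing R] {A B P Q D E : Matrix ι ι R} (hD : D * D = 1) (hE : E * E = 1)
    (hDt : Dᵀ = D) (hEt : Eᵀ = E) (hDP : Commute D P) (hDQ : Commute D Q)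
    (hEQ : Commute E Q⁻¹) :
    riccati (D * A * D) (D * B * E) P Q = D * riccati A B P Q * D := by
  have hA₁ : (D * A * D)ᵀ * P = D * (Aᵀ * P) * D := by
    simp only [transpose_mul, hDt, Matrix.mul_assoc, hDP.eq]
  have hA₂ : P * (D * A * D) = D * (P * A) * D := by
    simp only [← Matrix.mul_assoc, hDP.eq]
  have hQ : D * Q * D = Q := by
    rw [hDQ.eq, Matrix.mul_assoc, hD, Matrix.mul_one]
  have hB : P * (D * B * E) * Q⁻¹ * (D * B * E)ᵀ * P = D * (P * B * Q⁻¹ * Bᵀ * P) * D := by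
    simp only [transpose_mul, hDt, hEt, Matrix.mul_assoc]
    rw [← Matrix.mul_assoc E, hEQ.eq, Matrix.mul_assoc, ← Matrix.mul_assoc E E, hE, Matrix.one_mul]
    simp only [← Matrix.mul_assoc, hDP.eq]
  rw [riccati, riccati, hA₁, hA₂, hB]
  simp only [Matrix.mul_add, Matrix.add_mul, hQ]

end Matrix

theorem diag_riccati_sign_similarity {n : ℕ} (A B D E : Matrix (Fin n) (Fin n) ℝ)
    (hD : D.IsDiag) (hE : E.IsDiag)
    (hDs : ∀ i : Fin n, D i i = 1 ∨ D i i = -1)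
    (hEs : ∀ i : Fin n, E i i = 1 ∨ E i i = -1) :
    DiagRiccatiStable A B ↔ DiagRiccatiStable (D * A * D) (D * B * E) := by
  have hDD := hD.mul_self_eq_one hDs
  have hD' : IsSelfAdjoint D := by
    rw [IsSelfAdjoint, star_eq_conjTranspose, conjTranspose_eq_transpose_of_trivial]
    exact hD.isSymm
  have hconj {P Q : Matrix (Fin n) (Fin n) ℝ} (hP : P.IsDiag) (hQ : Q.IsDiag) :
      (-riccati (D * A * D) (D * B * E) P Q).PosDef ↔ (-riccati A B P Q).PosDef := by
    rw [riccati_conj hDD (hE.mul_self_eq_one hEs) hD.isSymm hE.isSymm (hD.commute hP)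
      (hD.commute hQ) (hE.commute hQ.inv), ← Matrix.neg_mul, ← Matrix.mul_neg]
    exact posDef_conj_involution_iff hD' hDD
  refine exists₂_congr fun P Q => and_congr_right fun hP => and_congr_right fun hQ => ?_
  exact and_congr_right' (and_congr_right' (hconj hP hQ).symm)
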